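/- arXiv:1305.1144 — 2 statements merged into one kernel-verified Lean document; each statement's English description precedes it below -/
import Mathlib

section
/- Let ν_1 ≥ ⋯ ≥ ν_n ≥ 0 be real numbers, let 1 ≤ k ≤ m ≤ n, and let π be a partition of m with l(π) ≤ n. Then for every α ∈ Γ_{m,n} such that π majorizes the multiplicity partition μ(α), one has p_{m−k}(ν_{ω(π)}) ≥ p_{m−k}(ν_α). (This is the comparison of eigenvalues used to identify the largest eigenvalue of D^k K_χ(P)(I,…,I) in the proof of the main norm formula.) -/
set_option synthInstance.maxHeartbeats 1000000
set_option maxHeartbeats 1000000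

noncomputable section

/-- `V = ℂⁿ` with the standard inner product. -/
abbrev Vec (n : ℕ) : Type := EuclideanSpace ℂ (Fin n)

/-- `L(V)`, the space of linear operators on `V`, with the operator norm. -/
abbrev Op (n : ℕ) : Type := Vec n →L[ℂ] Vec n

/-- Coordinate model of the `m`-th tensor power `⊗^m V` of `V = ℂⁿ`:
functions on multi-indices `Γ_{m,n}`, with the inner product making the pure tensors of
orthonormal vectors orthonormal. -/
abbrev TVec (n m : ℕ) : Type := EuclideanSpace ℂ (Fin m → Fin n)

abbrev TOp (n m : ℕ) : Type := TVec n m →L[ℂ] TVec n m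

/-- The `(a,b)` matrix entry of an operator on `ℂⁿ` in the standard basis. -/
def entry {n : ℕ} (S : Op n) (a b : Fin n) : ℂ := S (EuclideanSpace.single b 1) a

/-- The tensor product `T 0 ⊗ T 1 ⊗ ⋯ ⊗ T (m-1)` of a family of operators,
acting on `⊗^m V` (coordinate model). -/
def tensorFam {n m : ℕ} (T : Fin m → Op n) : TOp n m :=
  Matrix.toEuclideanCLM (𝕜 := ℂ)
    (Matrix.of fun α β : Fin m → Fin n => ∏ i, entry (T i) (α i) (β i))

/-- The `m`-th tensor power `⊗^m T` of the operator `T`. -/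
def tensorPow (n m : ℕ) (T : Op n) : TOp n m := tensorFam fun _ => T

/-- The symmetrized tensor product `X^1 ⊗̃ ⋯ ⊗̃ X^m = (1/m!) ∑_σ X^{σ(1)} ⊗ ⋯ ⊗ X^{σ(m)}`. -/
def symTensor {n m : ℕ} (X : Fin m → Op n) : TOp n m :=
  ((m.factorial : ℂ))⁻¹ • ∑ σ : Equiv.Perm (Fin m), tensorFam (X ∘ σ)

/-- The permutation operator `P(σ)` on `⊗^m V`, `P(σ)(v_1 ⊗ ⋯ ⊗ v_m) = v_{σ⁻¹(1)} ⊗ ⋯ ⊗ v_{σ⁻¹(m)}`. -/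
def permOp (n m : ℕ) (σ : Equiv.Perm (Fin m)) : TOp n m :=
  Matrix.toEuclideanCLM (𝕜 := ℂ)
    (Matrix.of fun α β : Fin m → Fin n => if β = α ∘ σ then 1 else 0)

/-- The symmetrizer `K_χ = (χ(id)/m!) ∑_σ χ(σ) P(σ)` associated with a character `χ` of `S_m`. -/
def Kproj (n m : ℕ) (χ : Equiv.Perm (Fin m) → ℂ) : TOp n m :=
  (χ 1 / (m.factorial : ℂ)) • ∑ σ : Equiv.Perm (Fin m), χ σ • permOp n m σ

/-- The symmetry class of tensors `V_χ`, the range of `K_χ`. -/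
def symClass (n m : ℕ) (χ : Equiv.Perm (Fin m) → ℂ) : Submodule ℂ (TVec n m) :=
  LinearMap.range (Kproj n m χ : TVec n m →ₗ[ℂ] TVec n m)

/-- `K_χ(T)`, the restriction of `⊗^m T` to the invariant subspace `V_χ`,
realized as `Q* ∘ (⊗^m T) ∘ Q` where `Q : V_χ → ⊗^m V` is the inclusion. -/
def Kmap (n m : ℕ) (χ : Equiv.Perm (Fin m) → ℂ) (T : Op n) :
    symClass n m χ →L[ℂ] symClass n m χ :=
  (symClass n m χ).orthogonalProjectionOnto.comp
    ((tensorPow n m T).comp (symClass n m χ).subtypeL)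

/-- `X^1 ∗ ⋯ ∗ X^m`, the restriction of `X^1 ⊗̃ ⋯ ⊗̃ X^m` to the invariant subspace `V_χ`. -/
def starProd (n m : ℕ) (χ : Equiv.Perm (Fin m) → ℂ) (X : Fin m → Op n) :
    symClass n m χ →L[ℂ] symClass n m χ :=
  (symClass n m χ).orthogonalProjectionOnto.comp
    ((symTensor X).comp (symClass n m χ).subtypeL)

/-- `χ` is the character of an irreducible complex representation of `S_m`. -/
def IsIrreducibleCharacter (m : ℕ) (χ : Equiv.Perm (Fin m) → ℂ) : Prop :=
  ∃ (d : ℕ) (ρ : Representation ℂ (Equiv.Perm (Fin m)) (Fin d → ℂ)),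
    0 < d ∧
    (∀ p : Submodule ℂ (Fin d → ℂ), (∀ g x, x ∈ p → ρ g x ∈ p) → p = ⊥ ∨ p = ⊤) ∧
    ∀ g, χ g = LinearMap.trace ℂ (Fin d → ℂ) (ρ g)

/-- `T` has singular values `ν 0 ≥ ν 1 ≥ ⋯ ≥ ν (n-1)` (singular value decomposition). -/
def HasSingularValues {n : ℕ} (T : Op n) (ν : Fin n → ℝ) : Prop :=
  (∀ i, 0 ≤ ν i) ∧ Antitone ν ∧
    ∃ e f : OrthonormalBasis (Fin n) ℂ (Vec n), ∀ i, T (e i) = (ν i : ℂ) • f i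

/-- `p_t`, the elementary symmetric polynomial of degree `t` in `m` variables. -/
def esymm {R : Type*} [CommSemiring R] (m t : ℕ) (x : Fin m → R) : R :=
  ∑ s ∈ Finset.powersetCard t Finset.univ, ∏ i ∈ s, x i

/-- `multFun α i = |α⁻¹(i)|`, the multiplicity function of `α ∈ Γ_{m,n}`, whose nonzero values,
arranged decreasingly, form the multiplicity partition `μ(α)`. -/
def multFun {m n : ℕ} (α : Fin m → Fin n) : Fin n → ℕ :=
  fun i => (Finset.univ.filter fun j => α j = i).card

/-- The (antitone) partition `π` majorizes the multiplicity list `c` (i.e. `μ ⪯ π` where `μ` is the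
decreasing rearrangement of `c`): for every `s`, the sum of any `s` values of `c` is at most
`π 0 + ⋯ + π (s-1)`. -/
def MajorizesMult {n : ℕ} (π : Fin n → ℕ) (c : Fin n → ℕ) : Prop :=
  ∀ A : Finset (Fin n),
    ∑ i ∈ A, c i ≤ ∑ j ∈ Finset.univ.filter (fun j : Fin n => (j : ℕ) < A.card), π j

/-- `w = ω(π) ∈ Γ_{m,n}`: the nondecreasing map taking each value `i` with multiplicity `π i`. -/
def IsOmega {m n : ℕ} (π : Fin n → ℕ) (w : Fin m → Fin n) : Prop :=
  Monotone w ∧ ∀ i, (Finset.univ.filter fun j => w j = i).card = π i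

/-- The condition `Ω_χ = {α : π majorizes μ(α)}`, i.e. for every `α ∈ Γ_{m,n}`,
`∑_{σ ∈ G_α} χ(σ) ≠ 0` iff `π` majorizes the multiplicity partition `μ(α)`; it holds exactly when
`π` is the partition of `m` canonically associated with the irreducible character `χ`. -/
def OmegaChiCondition {m n : ℕ} (χ : Equiv.Perm (Fin m) → ℂ) (π : Fin n → ℕ) : Prop :=
  ∀ α : Fin m → Fin n,
    (∑ σ ∈ Finset.univ.filter (fun σ : Equiv.Perm (Fin m) => α ∘ σ = α), χ σ) ≠ 0 ↔
      MajorizesMult π (multFun α)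

/-- A linear operator on a subspace `S` of `⊗^m V` is positive semidefinite
(for the inner product inherited from `⊗^m V`). -/
def IsPSDOn {n m : ℕ} (S : Submodule ℂ (TVec n m)) (A : S →L[ℂ] S) : Prop :=
  (∀ x y : S,
      (inner ℂ ((A x : TVec n m)) (y : TVec n m) : ℂ) = inner ℂ (x : TVec n m) ((A y : TVec n m))) ∧
  ∀ x : S, 0 ≤ (inner ℂ ((A x : TVec n m)) (x : TVec n m) : ℂ).re

/-- `⊗^m_S P`: the tensor product `X^1 ⊗ ⋯ ⊗ X^m` in which `X^i = P` for `i ∈ S` and `X^i = I`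
otherwise.  (A subset `S` of `{1,…,m}` of size `m-k` corresponds to the strictly increasing map
`β ∈ Q_{m-k,m}` enumerating it, so this realizes `⊗^m_β P`.) -/
def tensorSel {n m : ℕ} (S : Finset (Fin m)) (P : Op n) : TOp n m :=
  tensorFam fun i => if i ∈ S then P else 1

/-- The pure tensor `v_1 ⊗ ⋯ ⊗ v_m` in the coordinate model of `⊗^m V`. -/
def tensorVec {n m : ℕ} (v : Fin m → Vec n) : TVec n m :=
  (WithLp.equiv 2 ((Fin m → Fin n) → ℂ)).symm fun α => ∏ i, v i (α i)

/-- The decomposable symmetrized tensor `v_1 ∗ ⋯ ∗ v_m = K_χ(v_1 ⊗ ⋯ ⊗ v_m)`,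
as an element of `V_χ`. -/
def estarVec (n m : ℕ) (χ : Equiv.Perm (Fin m) → ℂ) (v : Fin m → Vec n) : symClass n m χ :=
  ⟨Kproj n m χ (tensorVec v), LinearMap.mem_range.mpr ⟨tensorVec v, rfl⟩⟩

/-!
Sort `α` into a monotone tuple, which changes neither `μ(α)` nor `p_{m−k}(ν_α)`. Majorization on
the initial segments `{0, …, i}` says that the sorted tuple has at most as many entries `≤ i` as
`ω(π)` has, and for two monotone tuples such a comparison of counts forces `ω(π) ≤ α` entrywise.
Since `ν` is antitone and nonnegative, `ν_α ≤ ν_{ω(π)}` entrywise, and `p_{m−k}` is monotone on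
nonnegative arguments.
-/

section Esymm

variable {R : Type*} [CommSemiring R] {m : ℕ}

theorem esymm_eq_multiset_esymm (t : ℕ) (x : Fin m → R) :
    esymm m t x = (Finset.univ.val.map x).esymm t :=
  (Finset.esymm_map_val x _ t).symm

theorem esymm_comp_perm (t : ℕ) (x : Fin m → R) (σ : Equiv.Perm (Fin m)) :
    esymm m t (x ∘ σ) = esymm m t x := by
  rw [esymm_eq_multiset_esymm, esymm_eq_multiset_esymm, ← Multiset.map_map,
    Multiset.map_univ_val_equiv]

theorem esymm_mono [PartialOrder R] [IsOrderedRing R] (t : ℕ) {x y : Fin m → R}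
    (hx : ∀ j, 0 ≤ x j) (hxy : ∀ j, x j ≤ y j) : esymm m t x ≤ esymm m t y :=
  Finset.sum_le_sum fun _ _ => Finset.prod_le_prod (fun i _ => hx i) (fun i _ => hxy i)

end Esymm

section Multiplicity

variable {m n : ℕ}

theorem multFun_comp_perm (α : Fin m → Fin n) (σ : Equiv.Perm (Fin m)) :
    multFun (α ∘ σ) = multFun α := by
  funext i
  exact Finset.card_equiv σ fun j => by simp

theorem card_filter_le_eq_sum_multFun (α : Fin m → Fin n) (i : Fin n) :
    (Finset.univ.filter fun j => α j ≤ i).card = ∑ i' ∈ Finset.Iic i, multFun α i' := by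
  simp_rw [multFun, Finset.card_filter]
  rw [Finset.sum_comm]
  simp [Finset.mem_Iic]

theorem MajorizesMult.card_filter_le_le {π : Fin n → ℕ} {α : Fin m → Fin n}
    (hα : MajorizesMult π (multFun α)) (i : Fin n) :
    (Finset.univ.filter fun j => α j ≤ i).card ≤ ∑ i' ∈ Finset.Iic i, π i' := by
  have hprefix : (Finset.univ.filter fun j : Fin n => (j : ℕ) < (Finset.Iic i).card) =
      Finset.Iic i := by
    ext j
    simp only [Finset.mem_filter, Finset.mem_univ, true_and, Fin.card_Iic, Finset.mem_Iic,
      Fin.le_def]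
    omega
  have h := hα (Finset.Iic i)
  rw [hprefix] at h
  rwa [card_filter_le_eq_sum_multFun]

theorem IsOmega.card_filter_le {π : Fin n → ℕ} {w : Fin m → Fin n} (hw : IsOmega π w)
    (i : Fin n) :
    (Finset.univ.filter fun j => w j ≤ i).card = ∑ i' ∈ Finset.Iic i, π i' := by
  rw [card_filter_le_eq_sum_multFun]
  exact Finset.sum_congr rfl fun i' _ => hw.2 i'

end Multiplicity

theorem Monotone.le_of_card_filter_le {β : Type*} [LinearOrder β] {m : ℕ} {a b : Fin m → β}
    (ha : Monotone a) (hb : Monotone b)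
    (hcount : ∀ i, (Finset.univ.filter fun j => a j ≤ i).card ≤
      (Finset.univ.filter fun j => b j ≤ i).card) (j : Fin m) :
    b j ≤ a j := by
  by_contra! hlt
  have hb_small : (Finset.univ.filter fun j' => b j' ≤ a j) ⊆ Finset.Iio j := by
    intro j' hj'
    simp only [Finset.mem_filter, Finset.mem_univ, true_and] at hj'
    simp only [Finset.mem_Iio]
    by_contra! hge
    exact (hlt.trans_le (hb hge)).not_ge hj'
  have ha_large : Finset.Iic j ⊆ (Finset.univ.filter fun j' => a j' ≤ a j) := by
    intro j' hj'
    simpa using ha (Finset.mem_Iic.mp hj')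
  have h1 := Finset.card_le_card hb_small
  have h2 := Finset.card_le_card ha_large
  have h3 := hcount (a j)
  simp only [Fin.card_Iio, Fin.card_Iic] at h1 h2
  omega

theorem IsOmega.le_of_majorizesMult {m n : ℕ} {π : Fin n → ℕ} {w α : Fin m → Fin n}
    (hw : IsOmega π w) (hα : MajorizesMult π (multFun α)) (hmono : Monotone α) (j : Fin m) :
    w j ≤ α j :=
  hmono.le_of_card_filter_le hw.1 (fun i => (hα.card_filter_le_le i).trans_eq
    (hw.card_filter_le i).symm) j

theorem esymm_omega_max_general (n m k : ℕ)
    (ν : Fin n → ℝ) (hν0 : ∀ i, 0 ≤ ν i) (hν : Antitone ν)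
    (π : Fin n → ℕ)
    (w : Fin m → Fin n) (hw : IsOmega π w)
    (α : Fin m → Fin n) (hα : MajorizesMult π (multFun α)) :
    esymm m (m - k) (fun j => ν (α j)) ≤ esymm m (m - k) (fun j => ν (w j)) := by
  set σ := Tuple.sort α
  have hsorted : MajorizesMult π (multFun (α ∘ σ)) := by rwa [multFun_comp_perm]
  have hwα : ∀ j, w j ≤ (α ∘ σ) j := hw.le_of_majorizesMult hsorted (Tuple.monotone_sort α)
  calc esymm m (m - k) (fun j => ν (α j))
      = esymm m (m - k) ((fun j => ν (α j)) ∘ σ) := (esymm_comp_perm _ _ σ).symm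
    _ ≤ esymm m (m - k) (fun j => ν (w j)) :=
        esymm_mono _ (fun _ => hν0 _) (fun j => hν (hwα j))

/-- for `ν_1 ≥ ⋯ ≥ ν_n ≥ 0`, a partition `π` of `m` (with at most `n` parts), and any
`α ∈ Γ_{m,n}` whose multiplicity partition `μ(α)` is majorized by `π`, one has
`p_{m−k}(ν_{ω(π)}) ≥ p_{m−k}(ν_α)`. -/
theorem esymm_omega_max (n m k : ℕ) (hk1 : 1 ≤ k) (hkm : k ≤ m) (hmn : m ≤ n)
    (ν : Fin n → ℝ) (hν0 : ∀ i, 0 ≤ ν i) (hν : Antitone ν)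
    (π : Fin n → ℕ) (hπ : Antitone π) (hπm : ∑ i, π i = m)
    (w : Fin m → Fin n) (hw : IsOmega π w)
    (α : Fin m → Fin n) (hα : MajorizesMult π (multFun α)) :
    esymm m (m - k) (fun j => ν (α j)) ≤ esymm m (m - k) (fun j => ν (w j)) :=
  esymm_omega_max_general n m k ν hν0 hν π w hw α hα

end
end

section
/- Let A ∈ M_n(ℂ) with singular values ν_1 ≥ ⋯ ≥ ν_n and let 1 ≤ k ≤ n. Then the k-th derivative of the determinant satisfies ‖D^k det(A)‖ ≤ k! · p_{n−k}(ν_1, …, ν_n). -/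
/-!
Write `A = U D W` with `U`, `W` unitary and `D = diag ν`. Since `X ↦ U X W` is a linear isometry
and `det (U X W) = det U * det W * det X` with `‖det U * det W‖ = 1`, the iterated derivatives of
`det` at `A` and at `D` have the same norm.

As `det` is multilinear in the rows, `D^k det(X)(V_1, …, V_k)` is the sum over injections
`e : Fin k ↪ Fin n` of the determinant of `X` with each row `e a` replaced by the row `e a` of
`V_a`. By Hadamard's inequality such a determinant is at most `∏_{j ∉ range e} ‖X_j‖ * ∏_a ‖V_a‖`,
and every `(n - k)`-subset is the complement of the range of exactly `k!` injections. The rows of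
`D` have norms `ν_j`.

Hadamard's inequality reduces to rows of norm one, where `|det B|² = det (B Bᴴ) = ∏ λ_i` with
`∑ λ_i = tr (B Bᴴ) = n`, and `λ ≤ exp (λ - 1)` gives `∏ λ_i ≤ 1`.
-/
set_option synthInstance.maxHeartbeats 1000000
set_option maxHeartbeats 1000000

noncomputable section

open scoped Matrix.Norms.L2Operator

/-- The immanant `d_χ(A) = ∑_{σ ∈ S_n} χ(σ) ∏_i a_{iσ(i)}` of a complex `n × n` matrix. -/
def immanant {n : ℕ} (χ : Equiv.Perm (Fin n) → ℂ) (A : Matrix (Fin n) (Fin n) ℂ) : ℂ :=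
  ∑ σ : Equiv.Perm (Fin n), χ σ * ∏ i, A i (σ i)

/-- The matrix `A` has singular values `ν 0 ≥ ν 1 ≥ ⋯ ≥ ν (n-1)`. -/
def MatrixHasSingularValues {n : ℕ} (A : Matrix (Fin n) (Fin n) ℂ) (ν : Fin n → ℝ) : Prop :=
  HasSingularValues (Matrix.toEuclideanCLM (𝕜 := ℂ) A) ν

open Finset
open scoped ComplexOrder Nat

theorem Real.prod_le_one_of_sum_eq_card {ι : Type*} {s : Finset ι} {f : ι → ℝ}
    (hf : ∀ i ∈ s, 0 ≤ f i) (hsum : ∑ i ∈ s, f i = #s) : ∏ i ∈ s, f i ≤ 1 :=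
  calc ∏ i ∈ s, f i ≤ ∏ i ∈ s, Real.exp (f i - 1) :=
        prod_le_prod hf fun i _ => by linarith [Real.add_one_le_exp (f i - 1)]
    _ = 1 := by rw [← Real.exp_sum, sum_sub_distrib, hsum]; simp

section EmbeddingCount

variable {ι : Type*} [Fintype ι] [DecidableEq ι]

def embeddingsWithImageEquiv {k : ℕ} (T : Finset ι) (hT : #T = k) :
    {e : Fin k ↪ ι // univ.map e = T} ≃ (Fin k ↪ T) where
  toFun e := e.1.codRestrict T fun a => by simp [← e.2]
  invFun g := ⟨g.trans (Function.Embedding.subtype _), eq_of_subset_of_card_le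
    (fun x hx => by obtain ⟨a, -, rfl⟩ := mem_map.mp hx; exact (g a).2) (by simp [hT])⟩
  left_inv _ := rfl
  right_inv _ := rfl

theorem card_filter_univ_map_eq {k : ℕ} (T : Finset ι) (hT : #T = k) :
    #{e : Fin k ↪ ι | univ.map e = T} = k ! := by
  rw [← Fintype.card_subtype, Fintype.card_congr (embeddingsWithImageEquiv T hT),
    Fintype.card_embedding_eq, Fintype.card_coe, hT, Fintype.card_fin, Nat.descFactorial_self]

theorem sum_embedding_prod_compl_map {R : Type*} [CommSemiring R] {k : ℕ}
    (hk : k ≤ Fintype.card ι) (f : ι → R) :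
    ∑ e : Fin k ↪ ι, ∏ j ∈ (univ.map e)ᶜ, f j =
      k ! * ∑ s ∈ powersetCard (Fintype.card ι - k) univ, ∏ i ∈ s, f i := by
  have hmaps : ∀ e : Fin k ↪ ι, (univ.map e)ᶜ ∈ powersetCard (Fintype.card ι - k) univ := by
    simp [card_compl]
  rw [← sum_fiberwise_of_maps_to fun e _ => hmaps e, mul_sum]
  refine sum_congr rfl fun s hs => ?_
  have hsc : #sᶜ = k := by rw [card_compl, (mem_powersetCard_univ.mp hs)]; omega
  have hfiber : ∀ e : Fin k ↪ ι, (univ.map e)ᶜ = s ↔ univ.map e = sᶜ := fun e => by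
    rw [compl_eq_comm, eq_comm]
  simp_rw [hfiber]
  have hterm : ∀ e ∈ ({e : Fin k ↪ ι | univ.map e = sᶜ} : Finset _),
      ∏ j ∈ (univ.map e)ᶜ, f j = ∏ j ∈ s, f j := fun e he => by
    rw [(mem_filter.mp he).2, compl_compl]
  rw [sum_congr rfl hterm, sum_const, card_filter_univ_map_eq _ hsc, nsmul_eq_mul]

end EmbeddingCount

namespace Matrix

section ReplaceRows

variable {α ι : Type*} [DecidableEq ι] {k : ℕ}

def replaceRows (X : Matrix ι ι α) (e : Fin k ↪ ι) (V : Fin k → Matrix ι ι α) : Matrix ι ι α :=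
  of fun j => if h : j ∈ Set.range e then V (e.toEquivRange.symm ⟨j, h⟩) j else X j

theorem replaceRows_apply_self (X : Matrix ι ι α) (e : Fin k ↪ ι) (V : Fin k → Matrix ι ι α)
    (a : Fin k) (c : ι) : replaceRows X e V (e a) c = V a (e a) c := by
  simp [replaceRows]

theorem replaceRows_apply_of_notMem (X : Matrix ι ι α) (e : Fin k ↪ ι)
    (V : Fin k → Matrix ι ι α) {j : ι} (hj : j ∉ Set.range e) (c : ι) :
    replaceRows X e V j c = X j c := by
  rw [replaceRows, of_apply, dif_neg hj]

end ReplaceRows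

variable {𝕜 : Type*} [RCLike 𝕜] {ι : Type*} [Fintype ι]

theorem mul_conjTranspose_apply_self (B : Matrix ι ι 𝕜) (i : ι) :
    (B * Bᴴ) i i = ((‖WithLp.toLp 2 (B i)‖ ^ 2 : ℝ) : 𝕜) := by
  rw [EuclideanSpace.norm_sq_eq, mul_apply]
  push_cast
  refine sum_congr rfl fun j _ => ?_
  rw [conjTranspose_apply, RCLike.star_def, RCLike.mul_conj]

variable [DecidableEq ι]

theorem norm_det_le_one_of_forall_norm_row_eq_one {B : Matrix ι ι 𝕜}
    (hB : ∀ i, ‖WithLp.toLp 2 (B i)‖ = 1) : ‖B.det‖ ≤ 1 := by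
  have hP : (B * Bᴴ).PosSemidef := posSemidef_self_mul_conjTranspose B
  have htrace : ∑ i, hP.isHermitian.eigenvalues i = Fintype.card ι := by
    have h := hP.isHermitian.trace_eq_sum_eigenvalues
    simp only [trace, diag, mul_conjTranspose_apply_self, hB] at h
    have h' : ((∑ i, hP.isHermitian.eigenvalues i : ℝ) : 𝕜) = ((Fintype.card ι : ℝ) : 𝕜) := by
      simpa using h.symm
    exact_mod_cast h'
  have hdet : ‖B.det‖ ^ 2 = ∏ i, hP.isHermitian.eigenvalues i := by
    have h : (B * Bᴴ).det = ((‖B.det‖ ^ 2 : ℝ) : 𝕜) := by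
      rw [det_mul, det_conjTranspose, RCLike.star_def, RCLike.mul_conj, RCLike.ofReal_pow]
    exact_mod_cast h.symm.trans hP.isHermitian.det_eq_prod_eigenvalues
  have := Real.prod_le_one_of_sum_eq_card (fun i _ => hP.eigenvalues_nonneg i) htrace
  nlinarith [norm_nonneg B.det]

theorem norm_det_le_prod_norm_row (B : Matrix ι ι 𝕜) :
    ‖B.det‖ ≤ ∏ i, ‖WithLp.toLp 2 (B i)‖ := by
  by_cases hzero : ∃ i, B i = 0
  · obtain ⟨i, hi⟩ := hzero
    rw [det_eq_zero_of_row_eq_zero i (fun j => by simp [hi]), norm_zero]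
    positivity
  push Not at hzero
  set r : ι → ℝ := fun i => ‖WithLp.toLp 2 (B i)‖
  have hr : ∀ i, r i ≠ 0 := fun i => by simpa [r] using hzero i
  have hB : B = diagonal (fun i => (r i : 𝕜)) * (diagonal (fun i => (r i : 𝕜)⁻¹) * B) := by
    rw [← Matrix.mul_assoc, diagonal_mul_diagonal]
    simp [hr]
  have hunit : ∀ i, ‖WithLp.toLp 2 ((diagonal (fun i => (r i : 𝕜)⁻¹) * B) i)‖ = 1 := by
    intro i
    have : (diagonal (fun i => (r i : 𝕜)⁻¹) * B) i = (r i : 𝕜)⁻¹ • B i := by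
      ext j; simp [diagonal_mul]
    rw [this, WithLp.toLp_smul, norm_smul, norm_inv, RCLike.norm_ofReal, abs_norm]
    exact inv_mul_cancel₀ (hr i)
  calc ‖B.det‖ = (∏ i, r i) * ‖(diagonal (fun i => (r i : 𝕜)⁻¹) * B).det‖ := by
        conv_lhs => rw [hB]
        rw [det_mul, det_diagonal, norm_mul, norm_prod]
        simp [r]
    _ ≤ ∏ i, r i := mul_le_of_le_one_right (by positivity)
        (norm_det_le_one_of_forall_norm_row_eq_one hunit)

theorem norm_toLp_row_le_l2_opNorm (A : Matrix ι ι 𝕜) (i : ι) :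
    ‖WithLp.toLp 2 (A i)‖ ≤ ‖A‖ := by
  have := l2_opNorm_mulVec Aᴴ (EuclideanSpace.single i 1)
  rw [l2_opNorm_conjTranspose, PiLp.norm_single, norm_one, mul_one] at this
  refine le_trans (le_of_eq ?_) this
  simp [EuclideanSpace.norm_eq]

variable (𝕜 ι) in
def detRowContinuousMultilinear : ContinuousMultilinearMap 𝕜 (fun _ : ι => ι → 𝕜) 𝕜 :=
  { (detRowAlternating : (ι → 𝕜) [⋀^ι]→ₗ[𝕜] 𝕜).toMultilinearMap with
    cont := continuous_id.matrix_det }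

variable (𝕜 ι) in
def rowsCLM : Matrix ι ι 𝕜 →L[𝕜] (ι → ι → 𝕜) :=
  LinearMap.toContinuousLinearMap (ofLinearEquiv 𝕜).symm.toLinearMap

theorem det_eq_detRowContinuousMultilinear_comp_rowsCLM :
    (det : Matrix ι ι 𝕜 → 𝕜) = detRowContinuousMultilinear 𝕜 ι ∘ rowsCLM 𝕜 ι := rfl

theorem contDiff_det {n : WithTop ℕ∞} : ContDiff 𝕜 n (det : Matrix ι ι 𝕜 → 𝕜) :=
  (detRowContinuousMultilinear 𝕜 ι).contDiff.comp (rowsCLM 𝕜 ι).contDiff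

theorem iteratedFDeriv_det_apply (k : ℕ) (X : Matrix ι ι 𝕜) (V : Fin k → Matrix ι ι 𝕜) :
    iteratedFDeriv 𝕜 k det X V = ∑ e : Fin k ↪ ι, (replaceRows X e V).det := by
  rw [det_eq_detRowContinuousMultilinear_comp_rowsCLM, (rowsCLM 𝕜 ι).iteratedFDeriv_comp_right
      (detRowContinuousMultilinear 𝕜 ι).contDiff X le_top,
    ContinuousMultilinearMap.iteratedFDeriv_eq]
  simp only [ContinuousMultilinearMap.iteratedFDeriv, _root_.sum_apply,
    ContinuousMultilinearMap.compContinuousLinearMap_apply,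
    ContinuousMultilinearMap.iteratedFDerivComponent_apply, Function.comp_apply]
  refine sum_congr rfl fun e _ => congrArg _ <| funext fun j =>
    dite_congr rfl (fun _ => ?_) (fun _ => rfl)
  -- the library's formula uses the classical `DecidableEq ι` in `Function.Embedding.toEquivRange`
  show V _ j = V _ j
  congr!

theorem norm_det_replaceRows_le {k : ℕ} (X : Matrix ι ι 𝕜) (e : Fin k ↪ ι)
    (V : Fin k → Matrix ι ι 𝕜) :
    ‖(replaceRows X e V).det‖ ≤ (∏ j ∈ (univ.map e)ᶜ, ‖WithLp.toLp 2 (X j)‖) * ∏ a, ‖V a‖ := by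
  have hrange : ∏ j ∈ univ.map e, ‖WithLp.toLp 2 (replaceRows X e V j)‖ ≤ ∏ a, ‖V a‖ := by
    rw [prod_map]
    refine prod_le_prod (fun _ _ => norm_nonneg _) fun a _ => ?_
    rw [show replaceRows X e V (e a) = V a (e a) from funext (replaceRows_apply_self X e V a)]
    exact norm_toLp_row_le_l2_opNorm _ _
  have hcompl : ∏ j ∈ (univ.map e)ᶜ, ‖WithLp.toLp 2 (replaceRows X e V j)‖ =
      ∏ j ∈ (univ.map e)ᶜ, ‖WithLp.toLp 2 (X j)‖ := prod_congr rfl fun j hj => by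
    rw [funext (replaceRows_apply_of_notMem X e V (by simpa using hj))]
  calc ‖(replaceRows X e V).det‖ ≤ ∏ j, ‖WithLp.toLp 2 (replaceRows X e V j)‖ :=
        norm_det_le_prod_norm_row _
    _ = (∏ j ∈ (univ.map e)ᶜ, ‖WithLp.toLp 2 (X j)‖) *
          ∏ j ∈ univ.map e, ‖WithLp.toLp 2 (replaceRows X e V j)‖ := by
        rw [← prod_mul_prod_compl (univ.map e), hcompl, mul_comm]
    _ ≤ _ := by gcongr

theorem norm_iteratedFDeriv_det_le {k : ℕ} (hk : k ≤ Fintype.card ι) (X : Matrix ι ι 𝕜) :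
    ‖iteratedFDeriv 𝕜 k det X‖ ≤
      k ! * ∑ s ∈ powersetCard (Fintype.card ι - k) univ, ∏ i ∈ s, ‖WithLp.toLp 2 (X i)‖ := by
  refine ContinuousMultilinearMap.opNorm_le_bound (by positivity) fun V => ?_
  rw [iteratedFDeriv_det_apply, ← sum_embedding_prod_compl_map hk, sum_mul]
  exact (norm_sum_le _ _).trans (sum_le_sum fun e _ => norm_det_replaceRows_le X e V)

def unitaryMulMul {U W : Matrix ι ι 𝕜} (hU : U ∈ unitaryGroup ι 𝕜) (hW : W ∈ unitaryGroup ι 𝕜) :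
    Matrix ι ι 𝕜 ≃ₗᵢ[𝕜] Matrix ι ι 𝕜 where
  toFun X := U * X * W
  invFun X := star U * X * star W
  map_add' X Y := by simp only [Matrix.mul_add, Matrix.add_mul]
  map_smul' c X := by simp
  left_inv X := by
    change star U * (U * X * W) * star W = X
    rw [← Matrix.mul_assoc, ← Matrix.mul_assoc, Unitary.star_mul_self_of_mem hU, Matrix.one_mul,
      Matrix.mul_assoc, Unitary.mul_star_self_of_mem hW, Matrix.mul_one]
  right_inv X := by
    change U * (star U * X * star W) * W = X
    rw [← Matrix.mul_assoc, ← Matrix.mul_assoc, Unitary.mul_star_self_of_mem hU, Matrix.one_mul,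
      Matrix.mul_assoc, Unitary.star_mul_self_of_mem hW, Matrix.mul_one]
  norm_map' X := by
    simp [CStarRing.norm_mul_mem_unitary _ hW, CStarRing.norm_mem_unitary_mul _ hU]

theorem norm_iteratedFDeriv_det_unitary_mul_mul {U W : Matrix ι ι 𝕜}
    (hU : U ∈ unitaryGroup ι 𝕜) (hW : W ∈ unitaryGroup ι 𝕜) (k : ℕ) (X : Matrix ι ι 𝕜) :
    ‖iteratedFDeriv 𝕜 k det (U * X * W)‖ = ‖iteratedFDeriv 𝕜 k det X‖ := by
  have hcomp : det ∘ unitaryMulMul hU hW = (U.det * W.det) • det := by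
    funext X
    change (U * X * W).det = U.det * W.det * X.det
    rw [det_mul, det_mul]
    ring
  have hnorm : ‖U.det * W.det‖ = 1 := by
    rw [norm_mul, CStarRing.norm_of_mem_unitary (det_of_mem_unitary hU),
      CStarRing.norm_of_mem_unitary (det_of_mem_unitary hW), one_mul]
  have h := (unitaryMulMul hU hW).norm_iteratedFDeriv_comp_right det X k
  rw [hcomp, iteratedFDeriv_const_smul_apply contDiff_det.contDiffAt, norm_smul, hnorm,
    one_mul] at h
  exact h.symm

theorem norm_toLp_diagonal_row (d : ι → 𝕜) (i : ι) :
    ‖WithLp.toLp 2 (diagonal d i)‖ = ‖d i‖ := by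
  rw [EuclideanSpace.norm_eq,
    Fintype.sum_eq_single i fun j hj => by simp [diagonal_apply_ne _ hj.symm]]
  simp

end Matrix

theorem MatrixHasSingularValues.exists_eq_unitary_mul_diagonal_mul {n : ℕ}
    {A : Matrix (Fin n) (Fin n) ℂ} {ν : Fin n → ℝ} (hν : MatrixHasSingularValues A ν) :
    ∃ U ∈ Matrix.unitaryGroup (Fin n) ℂ, ∃ W ∈ Matrix.unitaryGroup (Fin n) ℂ,
      A = U * Matrix.diagonal (fun i => (ν i : ℂ)) * W := by
  obtain ⟨-, -, e, f, he⟩ := hν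
  let b := EuclideanSpace.basisFun (Fin n) ℂ
  have hcol : A * b.toBasis.toMatrix e =
      b.toBasis.toMatrix f * Matrix.diagonal (fun i => (ν i : ℂ)) := by
    ext i j
    have := congr(WithLp.ofLp $(he j) i)
    rw [Matrix.ofLp_toEuclideanCLM] at this
    simpa [Matrix.mul_apply, Matrix.mulVec, dotProduct, Module.Basis.toMatrix_apply, b,
      Matrix.diagonal_apply, mul_comm] using this
  refine ⟨b.toBasis.toMatrix f, b.toMatrix_orthonormalBasis_mem_unitary f,
    star (b.toBasis.toMatrix e), Unitary.star_mem (b.toMatrix_orthonormalBasis_mem_unitary e), ?_⟩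
  rw [← hcol, Matrix.mul_assoc, Unitary.mul_star_self_of_mem
    (b.toMatrix_orthonormalBasis_mem_unitary e), Matrix.mul_one]

theorem norm_kth_deriv_det_le_general (n k : ℕ) (hkn : k ≤ n)
    (A : Matrix (Fin n) (Fin n) ℂ) (ν : Fin n → ℝ) (hν : MatrixHasSingularValues A ν) :
    ‖iteratedFDeriv ℂ k Matrix.det A‖ ≤ (k.factorial : ℝ) * esymm n (n - k) ν := by
  obtain ⟨U, hU, W, hW, rfl⟩ := hν.exists_eq_unitary_mul_diagonal_mul
  rw [Matrix.norm_iteratedFDeriv_det_unitary_mul_mul hU hW]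
  refine (Matrix.norm_iteratedFDeriv_det_le (by simpa using hkn) _).trans_eq ?_
  simp [esymm, Matrix.norm_toLp_diagonal_row, abs_of_nonneg (hν.1 _)]

/-- `‖D^k det(A)‖ ≤ k! · p_{n−k}(ν_1,…,ν_n)` for `1 ≤ k ≤ n`, where
`ν_1 ≥ ⋯ ≥ ν_n` are the singular values of `A`. -/
theorem norm_kth_deriv_det_le (n k : ℕ) (hk1 : 1 ≤ k) (hkn : k ≤ n)
    (A : Matrix (Fin n) (Fin n) ℂ) (ν : Fin n → ℝ) (hν : MatrixHasSingularValues A ν) :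
    ‖iteratedFDeriv ℂ k Matrix.det A‖ ≤ (k.factorial : ℝ) * esymm n (n - k) ν :=
  norm_kth_deriv_det_le_general n k hkn A ν hν
end
end
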